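/- Let M be a matroid flock of rank d on E, let g = g^M, let f := g^• be the Legendre–Fenchel dual of g, and let α, ω ∈ ℤ^E. Then the following are equivalent: (1) ω^T α = f(ω) + g(α); (2) ω = e_B for some basis B of M_α, where e_B := Σ_{i∈B} e_i. -/

import Mathlib

/-!
Condition (1) says that `ω` is a subgradient of `g` at `α`: `ωᵀy - g y ≤ ωᵀα - g α` for all `y`.
Testing `y = α ± e_I` gives `rk (M (α - e_I)) I ≤ ω(I) ≤ rk (M α) I`; on singletons this forces
`ω` to be a 0/1 vector, and on `E` and on the support `B` of `ω` it makes `B` an independent set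
of size `d`, i.e. a basis of `M α`.

Conversely, let `B` be a basis of `M α`. After a shift of `y` by a multiple of `𝟙` we may assume
`α ≤ y`, and climb from `α` to `y` in steps `α ↦ α + e_I`, `I = {α < y}`. An independent set
inside `I` stays independent in `M (α + e_I)`, so each step raises `g` by at least as much as it
raises `e_Bᵀ`.
-/

open Matroid Set

namespace FrobFlock

variable {E : Type*}

/-- The local rank function of a matroid: the size of a largest independent subset of `X`. -/
noncomputable def rk (M : Matroid E) (X : Set E) : ℕ :=
  sSup {n | ∃ I, I ⊆ X ∧ M.Indep I ∧ I.ncard = n}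

/-- Deletion of the set `D` from the matroid `M`. -/
def mdel (M : Matroid E) (D : Set E) : Matroid E := M ↾ (M.E \ D)

/-- Contraction of the set `C` in the matroid `M` (defined by duality). -/
def mcon (M : Matroid E) (C : Set E) : Matroid E := (mdel M✶ C)✶

/-- The 0/1 indicator vector of a set `I ⊆ E`. -/
noncomputable def eVec (I : Set E) : E → ℤ := I.indicator 1

/-- `M : ℤ^E → Matroid E` is a matroid flock of rank `d` on `E`:
each `M α` is a matroid on ground set `E` of rank `d`, satisfying (MF1) and (MF2). -/
def IsMatroidFlock [Fintype E] (d : ℕ) (M : (E → ℤ) → Matroid E) : Prop :=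
  (∀ α, (M α).E = Set.univ) ∧
  (∀ α, rk (M α) Set.univ = d) ∧
  (∀ α (i : E), mcon (M α) {i} = mdel (M (α + eVec {i})) {i}) ∧
  (∀ α, M α = M (α + 1))

/-- A matroid valuation `ν : binom(E,d) → ℤ ∪ {∞}`, encoded as a function on all finsets
which takes the value `⊤` outside `binom(E,d)`. -/
def IsValuation [DecidableEq E] (d : ℕ) (ν : Finset E → WithTop ℤ) : Prop :=
  (∀ B : Finset E, B.card ≠ d → ν B = ⊤) ∧
  (∃ B : Finset E, B.card = d ∧ ν B ≠ ⊤) ∧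
  (∀ B B' : Finset E, B.card = d → B'.card = d → ∀ i ∈ B \ B', ∃ j ∈ B' \ B,
      ν (insert j (B.erase i)) + ν (insert i (B'.erase j)) ≤ ν B + ν B')

/-- `B ∈ B^ν_α`: the set `B` attains the supremum `g^ν(α)`, i.e. `B` is a basis of `M^ν_α`. -/
def OptBasis (d : ℕ) (ν : Finset E → WithTop ℤ) (α : E → ℤ) (B : Finset E) : Prop :=
  B.card = d ∧ ν B ≠ ⊤ ∧ ∀ B' : Finset E, B'.card = d →
    ((∑ i ∈ B', α i : ℤ) : WithTop ℤ) + ν B ≤ ((∑ i ∈ B, α i : ℤ) : WithTop ℤ) + ν B'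


/-- The Legendre–Fenchel dual `g^•(ω) = sup { ωᵀy − g(y) : y ∈ ℤ^E }`, with values in
the extended reals (it is `⊤` when the supremum is infinite, and an integer otherwise). -/
noncomputable def fenchel [Fintype E] (g : (E → ℤ) → ℤ) (ω : E → ℤ) : EReal :=
  ⨆ y : E → ℤ, (((∑ i, ω i * y i : ℤ) : ℝ) : EReal) - ((g y : ℝ) : EReal)

/-- Interpret an element of `ℤ ∪ {∞}` as an extended real number. -/
noncomputable def toER : WithTop ℤ → EReal :=
  fun x => WithTop.recTopCoe ⊤ (fun z : ℤ => ((z : ℝ) : EReal)) x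

theorem eVec_empty : eVec (∅ : Set E) = 0 := indicator_empty _

theorem eVec_insert {j : E} {T : Set E} (hj : j ∉ T) : eVec (insert j T) = eVec {j} + eVec T := by
  rw [← singleton_union]
  exact indicator_union_of_disjoint (disjoint_singleton_left.2 hj) _

theorem eVec_apply (I : Set E) (i : E) [Decidable (i ∈ I)] :
    eVec I i = if i ∈ I then 1 else 0 := by
  simp [eVec, indicator_apply]

theorem mdel_eq_delete (M : Matroid E) (D : Set E) : mdel M D = M ＼ D := rfl

theorem mcon_eq_contract (M : Matroid E) (C : Set E) : mcon M C = M ／ C := rfl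

section Rank

variable [Finite E] {M : Matroid E} {I X : Set E}

theorem cast_rk (M : Matroid E) (X : Set E) : (rk M X : ℕ∞) = M.eRk X := by
  set S := {n | ∃ I, I ⊆ X ∧ M.Indep I ∧ I.ncard = n}
  have hne : S.Nonempty := ⟨0, ∅, empty_subset X, M.empty_indep, ncard_empty E⟩
  have hbdd : BddAbove S := ⟨X.ncard, fun _ ⟨I, hIX, _, hn⟩ ↦ hn ▸ ncard_le_ncard hIX⟩
  apply le_antisymm
  · obtain ⟨I, hIX, hI, hn⟩ := Nat.sSup_mem hne hbdd
    rw [rk, ← hn, coe_ncard_eq_encard]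
    exact hI.encard_le_eRk_of_subset hIX
  · obtain ⟨I, hI⟩ := M.exists_isBasis' X
    rw [← hI.encard_eq_eRk, ← coe_ncard_eq_encard, Nat.cast_le]
    exact le_csSup hbdd ⟨I, hI.subset, hI.indep, rfl⟩

theorem _root_.Matroid.Indep.rk_eq_ncard (hI : M.Indep I) : rk M I = I.ncard := by
  rw [← Nat.cast_inj (R := ℕ∞), cast_rk, coe_ncard_eq_encard, hI.eRk_eq_encard]

theorem _root_.Matroid.Indep.ncard_le_rk (hI : M.Indep I) (hIX : I ⊆ X) : I.ncard ≤ rk M X := by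
  rw [← Nat.cast_le (α := ℕ∞), cast_rk, coe_ncard_eq_encard]
  exact hI.encard_le_eRk_of_subset hIX

theorem _root_.Matroid.IsBasis.rk_eq_ncard (hI : M.IsBasis I X) : rk M X = I.ncard := by
  rw [← Nat.cast_inj (R := ℕ∞), cast_rk, coe_ncard_eq_encard, hI.eRk_eq_encard]

theorem rk_le_ncard (M : Matroid E) (X : Set E) : rk M X ≤ X.ncard := by
  rw [← Nat.cast_le (α := ℕ∞), cast_rk, coe_ncard_eq_encard]
  exact M.eRk_le_encard X

theorem indep_of_ncard_le_rk (h : X.ncard ≤ rk M X) : M.Indep X := by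
  rw [← Nat.cast_le (α := ℕ∞), cast_rk, coe_ncard_eq_encard] at h
  exact (M.isRkFinite_of_finite X.toFinite).indep_of_encard_le_eRk h

end Rank

namespace IsMatroidFlock

variable [Fintype E] {d : ℕ} {M : (E → ℤ) → Matroid E} {α : E → ℤ} {B S : Set E}

theorem ground_eq (hM : IsMatroidFlock d M) (α : E → ℤ) : (M α).E = univ :=
  hM.1 α

theorem rk_univ (hM : IsMatroidFlock d M) (α : E → ℤ) : rk (M α) univ = d :=
  hM.2.1 α

theorem eRank_eq (hM : IsMatroidFlock d M) (α : E → ℤ) : (M α).eRank = d := by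
  rw [← eRk_univ_eq, ← cast_rk, hM.rk_univ α]

theorem ncard_eq_of_isBase (hM : IsMatroidFlock d M) (hB : (M α).IsBase B) : B.ncard = d := by
  rw [← Nat.cast_inj (R := ℕ∞), coe_ncard_eq_encard, hB.encard_eq_eRank, hM.eRank_eq]

theorem isBase_of_indep_of_ncard_eq (hM : IsMatroidFlock d M) (hB : (M α).Indep B)
    (hcard : B.ncard = d) : (M α).IsBase B := by
  refine hB.isBase_of_eRk_ge B.toFinite ?_
  rw [hM.eRank_eq, hB.eRk_eq_encard, ← coe_ncard_eq_encard, hcard]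

theorem contract_eq_delete (hM : IsMatroidFlock d M) (α : E → ℤ) (i : E) :
    M α ／ {i} = M (α + eVec {i}) ＼ {i} := by
  rw [← mcon_eq_contract, ← mdel_eq_delete]
  exact hM.2.2.1 α i

/-- A nonloop `j` of `M α` is a coloop of `M (α + e_j)`: a base of `M (α + e_j)` avoiding `j`
would be independent in `M α ／ j`, giving `d + 1` independent elements in `M α`. -/
theorem mem_of_isBase_add_eVec (hM : IsMatroidFlock d M) {j : E} (hj : (M α).IsNonloop j)
    (hB : (M (α + eVec {j})).IsBase B) : j ∈ B := by
  by_contra hjB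
  have hdel : (M (α + eVec {j}) ＼ {j}).Indep B :=
    delete_indep_iff.2 ⟨hB.indep, disjoint_singleton_right.2 hjB⟩
  rw [← hM.contract_eq_delete, hj.contractElem_indep_iff] at hdel
  have := hdel.2.ncard_le_rk (subset_univ _)
  rw [hM.rk_univ, ncard_insert_of_notMem hjB, hM.ncard_eq_of_isBase hB] at this
  omega

theorem indep_add_eVec_singleton (hM : IsMatroidFlock d M) (hS : (M α).Indep S) {j : E}
    (hj : j ∈ S) : (M (α + eVec {j})).Indep S := by
  have hS' : (M α ／ {j}).Indep (S \ {j}) := hS.diff_indep_contract_of_subset (by simpa)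
  rw [hM.contract_eq_delete, delete_indep_iff] at hS'
  obtain ⟨B, hB, hSB⟩ := hS'.1.exists_isBase_superset
  have hjB := hM.mem_of_isBase_add_eVec (hS.subset (singleton_subset_iff.2 hj)).isNonloop hB
  exact hB.indep.subset ((subset_insert_sdiff_singleton j S).trans (insert_subset hjB hSB))

theorem indep_add_eVec_of_subset (hM : IsMatroidFlock d M) {T : Set E} (hTS : T ⊆ S)
    (hS : (M α).Indep S) : (M (α + eVec T)).Indep S := by
  induction T, T.toFinite using Set.Finite.induction_on generalizing α with
  | empty => rwa [eVec_empty, add_zero]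
  | @insert j T hjT _ ih =>
    have hS' := hM.indep_add_eVec_singleton hS (hTS (mem_insert j T))
    rw [eVec_insert hjT, ← add_assoc]
    exact ih ((subset_insert j T).trans hTS) hS'

end IsMatroidFlock

/-- Both ways of computing `g (α + e_I + e_J) - g α` must agree. -/
theorem rk_add_rk_add_eVec_comm {M : (E → ℤ) → Matroid E} {g : (E → ℤ) → ℤ}
    (hg : ∀ (α : E → ℤ) (I : Set E), g (α + eVec I) = g α + rk (M α) I) (α : E → ℤ)
    (I J : Set E) :
    (rk (M α) I + rk (M (α + eVec I)) J : ℤ) = rk (M α) J + rk (M (α + eVec J)) I := by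
  have h := hg (α + eVec I) J
  rw [add_right_comm, hg, hg α I] at h
  linarith [hg α J]

section Potential

variable [Fintype E] {d : ℕ} {M : (E → ℤ) → Matroid E} {g : (E → ℤ) → ℤ}

/-- A basis `T` of `I` in `M α` stays independent in `M (α + e_T)`, so the exchange identity
gives `rk (M (α + e_I)) T ≥ |T| + |T| - rk (M α) I = |T|`. -/
theorem IsMatroidFlock.indep_add_eVec_of_superset (hM : IsMatroidFlock d M)
    (hg : ∀ (α : E → ℤ) (I : Set E), g (α + eVec I) = g α + rk (M α) I) {α : E → ℤ}
    {S I : Set E} (hS : (M α).Indep S) (hSI : S ⊆ I) : (M (α + eVec I)).Indep S := by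
  obtain ⟨T, hT, hST⟩ := hS.subset_isBasis_of_subset hSI (hM.ground_eq α ▸ subset_univ I)
  have hTT : T.ncard ≤ rk (M (α + eVec T)) I :=
    (hM.indep_add_eVec_of_subset subset_rfl hT.indep).ncard_le_rk hT.subset
  have hexch := rk_add_rk_add_eVec_comm hg α I T
  rw [hT.rk_eq_ncard, hT.indep.rk_eq_ncard] at hexch
  refine (indep_of_ncard_le_rk ?_).subset hST
  omega

/-- Raise `α` by `e_I` on the set `I` where `α < y`: `g` grows by `rk (M α) I ≥ |S ∩ I|`, and
`S ∩ I` stays independent, so induct on a bound `n` for `y - α`. -/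
theorem IsMatroidFlock.add_sum_sub_le_of_le_add (hM : IsMatroidFlock d M)
    (hg : ∀ (α : E → ℤ) (I : Set E), g (α + eVec I) = g α + rk (M α) I) (n : ℕ)
    {α y : E → ℤ} (hαy : α ≤ y) (hyα : ∀ i, y i ≤ α i + n) {S : Finset E}
    (hS : (M α).Indep ↑S) : g α + ∑ i ∈ S, (y i - α i) ≤ g y := by
  classical
  induction n generalizing α S with
  | zero =>
    obtain rfl : y = α := funext fun i ↦ le_antisymm (by simpa using hyα i) (hαy i)
    simp
  | succ n ih =>
    set I : Set E := {i | α i < y i}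
    set S' := S.filter (fun i ↦ α i < y i)
    have hS'I : (↑S' : Set E) ⊆ I := fun i hi ↦ (Finset.mem_filter.1 hi).2
    have hS'S : (↑S' : Set E) ⊆ ↑S := Finset.filter_subset _ _
    have hcard : (S'.card : ℤ) ≤ rk (M α) I := by
      exact_mod_cast ncard_coe_finset S' ▸ (hS.subset hS'S).ncard_le_rk hS'I
    have hα' : ∀ i, (α + eVec I) i = if α i < y i then α i + 1 else α i := fun i ↦ by
      by_cases h : α i < y i <;> simp [eVec_apply, I, h]
    have hsum : ∑ i ∈ S, (y i - α i) = ∑ i ∈ S', (y i - (α + eVec I) i) + S'.card := by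
      rw [Finset.card_eq_sum_ones, Nat.cast_sum, ← Finset.sum_add_distrib,
        ← Finset.sum_filter_of_ne fun i _ h ↦ lt_of_le_of_ne (hαy i) (sub_ne_zero.1 h).symm]
      refine Finset.sum_congr rfl fun i hi ↦ ?_
      rw [hα', if_pos (Finset.mem_filter.1 hi).2]
      push_cast
      ring
    have hle : ∀ i, (α + eVec I) i ≤ y i := fun i ↦ by
      have := hαy i
      rw [hα']
      split_ifs <;> omega
    have hle' : ∀ i, y i ≤ (α + eVec I) i + n := fun i ↦ by
      have := hαy i
      have := hyα i
      rw [hα']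
      split_ifs <;> omega
    have := ih hle hle' (hM.indep_add_eVec_of_superset hg (hS.subset hS'S) hS'I)
    rw [hg] at this
    linarith

theorem IsMatroidFlock.add_sum_sub_le_of_le (hM : IsMatroidFlock d M)
    (hg : ∀ (α : E → ℤ) (I : Set E), g (α + eVec I) = g α + rk (M α) I)
    {α y : E → ℤ} (hαy : α ≤ y) {S : Finset E} (hS : (M α).Indep ↑S) :
    g α + ∑ i ∈ S, (y i - α i) ≤ g y := by
  refine hM.add_sum_sub_le_of_le_add hg (∑ i, (y i - α i).toNat) hαy (fun i ↦ ?_) hS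
  have : (y i - α i).toNat ≤ ∑ j, (y j - α j).toNat :=
    Finset.single_le_sum (f := fun j ↦ (y j - α j).toNat) (by simp) (Finset.mem_univ i)
  have := Int.self_le_toNat (y i - α i)
  omega

theorem IsMatroidFlock.apply_add_natCast (hM : IsMatroidFlock d M)
    (hg : ∀ (α : E → ℤ) (I : Set E), g (α + eVec I) = g α + rk (M α) I) (y : E → ℤ) (k : ℕ) :
    g (y + k) = g y + k * d := by
  induction k with
  | zero => simp
  | succ k ih =>
    have h := hg (y + k) univ
    rw [eVec, indicator_univ, add_assoc, ← Nat.cast_succ, ih, hM.rk_univ] at h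
    rw [h]
    push_cast
    ring

/-- Shifting `y` by `k 𝟙` changes both sides by `k d`, as `|B| = d`; for large `k`, `α ≤ y + k`. -/
theorem IsMatroidFlock.sum_sub_le_of_isBase (hM : IsMatroidFlock d M)
    (hg : ∀ (α : E → ℤ) (I : Set E), g (α + eVec I) = g α + rk (M α) I)
    {α : E → ℤ} {B : Finset E} (hB : (M α).IsBase ↑B) (y : E → ℤ) :
    ∑ i ∈ B, y i - g y ≤ ∑ i ∈ B, α i - g α := by
  set k := ∑ i, (α i - y i).toNat
  have hαy : α ≤ y + k := fun i ↦ by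
    have : (α i - y i).toNat ≤ k :=
      Finset.single_le_sum (f := fun j ↦ (α j - y j).toNat) (by simp) (Finset.mem_univ i)
    have := Int.self_le_toNat (α i - y i)
    simp only [Pi.add_apply, Pi.natCast_apply]
    omega
  have h := hM.add_sum_sub_le_of_le hg hαy hB.indep
  have hcard : B.card = d := by simpa using hM.ncard_eq_of_isBase hB
  rw [hM.apply_add_natCast hg, Finset.sum_sub_distrib] at h
  simp only [Pi.add_apply, Pi.natCast_apply, Finset.sum_add_distrib, Finset.sum_const,
    hcard, nsmul_eq_mul] at h
  linarith

end Potential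

section Subgradient

variable [Fintype E] {d : ℕ} {M : (E → ℤ) → Matroid E} {g : (E → ℤ) → ℤ} {α ω : E → ℤ}

theorem dotProduct_eVec (ω : E → ℤ) (I : Finset E) : ω ⬝ᵥ eVec ↑I = ∑ i ∈ I, ω i := by
  classical
  simp [dotProduct, eVec_apply, Finset.sum_ite_mem]

theorem eVec_dotProduct (I : Finset E) (y : E → ℤ) : eVec ↑I ⬝ᵥ y = ∑ i ∈ I, y i := by
  rw [dotProduct_comm, dotProduct_eVec]

theorem sum_le_rk_of_forall_le
    (hg : ∀ (α : E → ℤ) (I : Set E), g (α + eVec I) = g α + rk (M α) I)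
    (hω : ∀ y, ω ⬝ᵥ y - g y ≤ ω ⬝ᵥ α - g α) (I : Finset E) :
    ∑ i ∈ I, ω i ≤ rk (M α) ↑I := by
  have h := hω (α + eVec ↑I)
  rw [dotProduct_add, dotProduct_eVec, hg] at h
  linarith

theorem rk_sub_eVec_le_sum_of_forall_le
    (hg : ∀ (α : E → ℤ) (I : Set E), g (α + eVec I) = g α + rk (M α) I)
    (hω : ∀ y, ω ⬝ᵥ y - g y ≤ ω ⬝ᵥ α - g α) (I : Finset E) :
    rk (M (α - eVec ↑I)) ↑I ≤ ∑ i ∈ I, ω i := by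
  have h := hω (α - eVec ↑I)
  have hgα := hg (α - eVec ↑I) ↑I
  rw [sub_add_cancel] at hgα
  rw [dotProduct_sub, dotProduct_eVec] at h
  linarith

theorem IsMatroidFlock.exists_isBase_eq_eVec_of_forall_le (hM : IsMatroidFlock d M)
    (hg : ∀ (α : E → ℤ) (I : Set E), g (α + eVec I) = g α + rk (M α) I)
    (hω : ∀ y, ω ⬝ᵥ y - g y ≤ ω ⬝ᵥ α - g α) :
    ∃ B : Finset E, (M α).IsBase ↑B ∧ ω = eVec ↑B := by
  have hup := sum_le_rk_of_forall_le hg hω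
  have hdown := rk_sub_eVec_le_sum_of_forall_le hg hω
  have h01 : ∀ j, ω j = 0 ∨ ω j = 1 := fun j ↦ by
    have h1 := hup {j}
    have h2 := hdown {j}
    have h3 := rk_le_ncard (M α) {j}
    simp only [Finset.sum_singleton, Finset.coe_singleton, ncard_singleton] at h1 h2 h3
    omega
  set B := Finset.univ.filter (ω · = 1)
  have hωB : ω = eVec ↑B := funext fun j ↦ by
    classical
    rcases h01 j with h | h <;> simp [eVec_apply, B, h]
  have hsumB : ∑ i ∈ B, ω i = B.card := by
    rw [Finset.card_eq_sum_ones, Nat.cast_sum]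
    exact Finset.sum_congr rfl fun i hi ↦ (Finset.mem_filter.1 hi).2
  have hsum_univ : ∑ i, ω i = ∑ i ∈ B, ω i :=
    (Finset.sum_filter_of_ne fun i _ h ↦ (h01 i).resolve_left h).symm
  have hcard : B.card = d := by
    have h1 := hup Finset.univ
    have h2 := hdown Finset.univ
    rw [Finset.coe_univ, hM.rk_univ] at h1 h2
    omega
  have hindep : (M α).Indep ↑B := by
    refine indep_of_ncard_le_rk ?_
    have := hup B
    rw [ncard_coe_finset]
    omega
  exact ⟨B, hM.isBase_of_indep_of_ncard_eq hindep (by rwa [ncard_coe_finset]), hωB⟩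

end Subgradient

section Fenchel

variable [Fintype E] {g : (E → ℤ) → ℤ} {α ω : E → ℤ}

theorem coe_sub_le_fenchel (g : (E → ℤ) → ℤ) (ω y : E → ℤ) :
    (((ω ⬝ᵥ y - g y : ℤ) : ℝ) : EReal) ≤ fenchel g ω := by
  refine le_iSup_of_le (ι := E → ℤ) y (le_of_eq ?_)
  rw [Int.cast_sub, EReal.coe_sub]
  rfl

theorem fenchel_le {c : EReal} (h : ∀ y, (((ω ⬝ᵥ y - g y : ℤ) : ℝ) : EReal) ≤ c) :
    fenchel g ω ≤ c :=
  iSup_le fun y ↦ by rw [← EReal.coe_sub, ← Int.cast_sub]; exact h y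

theorem coe_eq_fenchel_add_iff :
    (((ω ⬝ᵥ α : ℤ) : ℝ) : EReal) = fenchel g ω + ((g α : ℝ) : EReal) ↔
      ∀ y, ω ⬝ᵥ y - g y ≤ ω ⬝ᵥ α - g α := by
  constructor
  · intro h y
    have hy := coe_sub_le_fenchel g ω y
    induction hf : fenchel g ω using EReal.rec with
    | bot => simp [hf] at h
    | top => simp [hf] at h
    | coe r =>
      rw [hf, ← EReal.coe_add, EReal.coe_eq_coe_iff] at h
      rw [hf, EReal.coe_le_coe_iff] at hy
      exact_mod_cast (show ((ω ⬝ᵥ y - g y : ℤ) : ℝ) ≤ ((ω ⬝ᵥ α - g α : ℤ) : ℝ) by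
        push_cast at hy ⊢
        linarith)
  · intro h
    rw [le_antisymm (fenchel_le fun y ↦ by exact_mod_cast h y) (coe_sub_le_fenchel g ω α),
      ← EReal.coe_add, Int.cast_sub, sub_add_cancel]

end Fenchel

theorem flock_fenchel_dual_basis_general [Fintype E] (d : ℕ) (M : (E → ℤ) → Matroid E)
    (hM : IsMatroidFlock d M) (g : (E → ℤ) → ℤ)
    (hg : ∀ (α : E → ℤ) (I : Set E), g (α + eVec I) = g α + rk (M α) I)
    (α ω : E → ℤ) :
    (((∑ i, ω i * α i : ℤ) : ℝ) : EReal) = fenchel g ω + ((g α : ℝ) : EReal) ↔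
      ∃ B : Finset E, (M α).IsBase ↑B ∧ ω = eVec ↑B := by
  refine coe_eq_fenchel_add_iff.trans ⟨hM.exists_isBase_eq_eVec_of_forall_le hg, ?_⟩
  rintro ⟨B, hB, rfl⟩ y
  simpa only [eVec_dotProduct] using hM.sum_sub_le_of_isBase hg hB y

/-- **Lemma.** Let `M` be a matroid flock of rank `d` on `E`, let `g = g^M`, let `f := g^•`
be the Legendre–Fenchel dual of `g`, and let `α, ω ∈ ℤ^E`.  Then `ωᵀα = f(ω) + g(α)` if and
only if `ω = e_B` for some basis `B` of `M_α`. -/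
theorem flock_fenchel_dual_basis [Fintype E] (d : ℕ) (M : (E → ℤ) → Matroid E)
    (hM : IsMatroidFlock d M) (g : (E → ℤ) → ℤ) (hg0 : g 0 = 0)
    (hg : ∀ (α : E → ℤ) (I : Set E), g (α + eVec I) = g α + rk (M α) I)
    (α ω : E → ℤ) :
    (((∑ i, ω i * α i : ℤ) : ℝ) : EReal) = fenchel g ω + ((g α : ℝ) : EReal) ↔
      ∃ B : Finset E, (M α).IsBase ↑B ∧ ω = eVec ↑B :=
  flock_fenchel_dual_basis_general d M hM g hg α ω

end FrobFlock
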